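/- Let M be a real symmetric 3×3 matrix, let v ∈ ℝ³ be a unit vector with M v = λ v for some λ ∈ ℝ, and set R̃ := 2 v vᵀ − I₃. Let θ ∈ (0, π] and let U be a nonempty finite set of unit vectors in ℝ³. Then tr((I₃ − R̃) M) − min_{u ∈ U} tr((I₃ − R̃ R_a(θ,u)) M) = (1 − cos θ) · max_{u ∈ U} Δ_M(u, v). In particular, for any δ < (1 − cos θ) · max_{u ∈ U} Δ_M(u, v), the left-hand side is strictly greater than δ. -/

import Mathlib

open Matrix

/-- The skew-symmetric matrix `x^×` with `x^× y = x × y`. -/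
noncomputable def crossMat (x : Fin 3 → ℝ) : Matrix (Fin 3) (Fin 3) ℝ :=
  !![0, -x 2, x 1; x 2, 0, -x 0; -x 1, x 0, 0]

/-- The angle-axis rotation `R_a(θ, u) = I + sin θ · u^× + (1 − cos θ) · (u^×)²`. -/
noncomputable def Ra (θ : ℝ) (u : Fin 3 → ℝ) : Matrix (Fin 3) (Fin 3) ℝ :=
  1 + Real.sin θ • crossMat u + (1 - Real.cos θ) • (crossMat u * crossMat u)

/-- `Δ_M(u, v) := uᵀ (tr(M_v) I₃ − M_v) u` where `M_v := M (I₃ − 2 v vᵀ)`. -/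
noncomputable def DeltaM (M : Matrix (Fin 3) (Fin 3) ℝ) (u v : Fin 3 → ℝ) : ℝ :=
  u ⬝ᵥ ((M * (1 - (2 : ℝ) • vecMulVec v v)).trace • (1 : Matrix (Fin 3) (Fin 3) ℝ)
      - M * (1 - (2 : ℝ) • vecMulVec v v)).mulVec u

/-! With `M_v := M (I − 2vvᵀ) = −M R̃`, the gap for one axis `u` is
`tr(R̃ (R_a(θ,u) − I) M) = −sin θ · tr(u^× M_v) − (1 − cos θ) · tr((u^×)² M_v)`.
Since `v` is an eigenvector, `M_v = M − 2λvvᵀ` is symmetric, so its trace against the skew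
matrix `u^×` vanishes, and `(u^×)² = uuᵀ − |u|² I` turns the second term into `Δ_M(u, v)`.
As `1 − cos θ ≥ 0`, the minimum over `U` of the traces becomes the maximum of `Δ_M`. -/

theorem Finset.sub_inf' {ι α : Type*} [AddCommGroup α] [Lattice α] [IsOrderedAddMonoid α]
    {s : Finset ι} (hs : s.Nonempty) (a : α) (f : ι → α) :
    a - s.inf' hs f = s.sup' hs (fun i => a - f i) := by
  refine le_antisymm ?_ (Finset.sup'_le _ _ fun i hi => sub_le_sub_left (Finset.inf'_le f hi) a)
  rw [sub_le_comm]
  exact Finset.le_inf' _ _ fun i hi => sub_le_comm.mp (Finset.le_sup' (fun i => a - f i) hi)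

namespace Matrix

variable {n R : Type*} [Fintype n] [CommRing R]

theorem trace_mul_eq_zero_of_transpose_eq_neg [IsAddTorsionFree R] {K A : Matrix n n R}
    (hK : Kᵀ = -K) (hA : A.IsSymm) : (K * A).trace = 0 := by
  refine self_eq_neg.mp ?_
  calc (K * A).trace = (K * A)ᵀ.trace := (trace_transpose _).symm
    _ = -(K * A).trace := by
      rw [transpose_mul, hA.eq, hK, Matrix.mul_neg, trace_neg, trace_mul_comm]

theorem IsSymm.mul_one_sub_smul_vecMulVec [DecidableEq n] {M : Matrix n n R} (hM : M.IsSymm)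
    {v : n → R} {lam : R} (hv : M *ᵥ v = lam • v) (c : R) :
    (M * (1 - c • vecMulVec v v)).IsSymm := by
  have hvv : (vecMulVec v v).IsSymm := transpose_vecMulVec v v
  rw [Matrix.mul_sub, Matrix.mul_one, Matrix.mul_smul, mul_vecMulVec, hv, smul_vecMulVec,
    smul_smul]
  exact hM.sub (hvv.smul _)

theorem neg_trace_vecMulVec_sub_smul_one_mul [DecidableEq n] (a : n → R) (N : Matrix n n R) :
    -((vecMulVec a a - (a ⬝ᵥ a) • 1) * N).trace = a ⬝ᵥ (N.trace • 1 - N) *ᵥ a := by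
  simp only [sub_mul, smul_mul, Matrix.one_mul, vecMulVec_mul, trace_sub, trace_smul,
    trace_vecMulVec, sub_mulVec, smul_mulVec, one_mulVec, dotProduct_sub, dotProduct_smul,
    dotProduct_mulVec, smul_eq_mul, dotProduct_comm a (a ᵥ* N)]
  ring

end Matrix

theorem crossMat_transpose (u : Fin 3 → ℝ) : (crossMat u)ᵀ = -crossMat u := by
  ext i j
  fin_cases i <;> fin_cases j <;> simp [crossMat]

theorem crossMat_mul_self (u : Fin 3 → ℝ) :
    crossMat u * crossMat u = vecMulVec u u - (u ⬝ᵥ u) • 1 := by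
  ext i j
  fin_cases i <;> fin_cases j <;>
    simp [crossMat, mul_apply, vecMulVec_apply, dotProduct, Fin.sum_univ_three] <;> ring

theorem Ra_sub_one (θ : ℝ) (u : Fin 3 → ℝ) :
    Ra θ u - 1 = Real.sin θ • crossMat u + (1 - Real.cos θ) • (crossMat u * crossMat u) := by
  rw [Ra, add_assoc, add_sub_cancel_left]

theorem trace_sub_trace_mul_Ra {M : Matrix (Fin 3) (Fin 3) ℝ} (hM : M.IsSymm) {v : Fin 3 → ℝ}
    {lam : ℝ} (hev : M *ᵥ v = lam • v) {Rt : Matrix (Fin 3) (Fin 3) ℝ}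
    (hRt : Rt = (2 : ℝ) • vecMulVec v v - 1) (θ : ℝ) (u : Fin 3 → ℝ) :
    ((1 - Rt) * M).trace - ((1 - Rt * Ra θ u) * M).trace = (1 - Real.cos θ) * DeltaM M u v := by
  set Mv := M * (1 - (2 : ℝ) • vecMulVec v v)
  have hMv : Mv.IsSymm := hM.mul_one_sub_smul_vecMulVec hev 2
  have hskew : (crossMat u * Mv).trace = 0 :=
    trace_mul_eq_zero_of_transpose_eq_neg (crossMat_transpose u) hMv
  have hDelta : DeltaM M u v = -(crossMat u * crossMat u * Mv).trace := by
    rw [crossMat_mul_self, neg_trace_vecMulVec_sub_smul_one_mul]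
    rfl
  calc ((1 - Rt) * M).trace - ((1 - Rt * Ra θ u) * M).trace
      = (Rt * (Ra θ u - 1) * M).trace := by
        rw [← trace_sub]
        congr 1
        noncomm_ring
    _ = -((Ra θ u - 1) * Mv).trace := by
        rw [Matrix.mul_assoc, trace_mul_comm, Matrix.mul_assoc, ← trace_neg, ← Matrix.mul_neg]
        congr 3
        simp only [Mv, hRt, Matrix.mul_sub, neg_sub]
    _ = (1 - Real.cos θ) * DeltaM M u v := by
        rw [Ra_sub_one, add_mul, smul_mul, smul_mul, trace_add, trace_smul, trace_smul, hskew,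
          hDelta, smul_eq_mul, smul_eq_mul]
        ring

theorem trace_gap_min_max_general
    (M : Matrix (Fin 3) (Fin 3) ℝ) (hMsym : M.IsSymm)
    (v : Fin 3 → ℝ) (lam : ℝ) (hev : M.mulVec v = lam • v)
    (Rt : Matrix (Fin 3) (Fin 3) ℝ) (hRt : Rt = (2 : ℝ) • vecMulVec v v - 1)
    (θ : ℝ)
    (U : Finset (Fin 3 → ℝ)) (hUne : U.Nonempty) :
    ((1 - Rt) * M).trace - U.inf' hUne (fun u => ((1 - Rt * Ra θ u) * M).trace) =
      (1 - Real.cos θ) * U.sup' hUne (fun u => DeltaM M u v) ∧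
    ∀ δ : ℝ, δ < (1 - Real.cos θ) * U.sup' hUne (fun u => DeltaM M u v) →
      δ < ((1 - Rt) * M).trace - U.inf' hUne (fun u => ((1 - Rt * Ra θ u) * M).trace) := by
  have hgap : ((1 - Rt) * M).trace - U.inf' hUne (fun u => ((1 - Rt * Ra θ u) * M).trace) =
      (1 - Real.cos θ) * U.sup' hUne (fun u => DeltaM M u v) := by
    rw [Finset.sub_inf', Finset.mul₀_sup' (sub_nonneg.mpr (Real.cos_le_one θ))]
    simp only [trace_sub_trace_mul_Ra hMsym hev hRt]
  exact ⟨hgap, fun δ hδ => hgap ▸ hδ⟩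

/-- For a symmetric `M` with unit eigenvector `v`, `R̃ := 2vvᵀ − I`, `θ ∈ (0, π]` and a
nonempty finite set `U` of unit vectors,
`tr((I − R̃)M) − min_{u ∈ U} tr((I − R̃ R_a(θ,u))M) = (1 − cos θ) · max_{u ∈ U} Δ_M(u, v)`;
in particular the left-hand side is `> δ` for any `δ < (1 − cos θ) · max_{u ∈ U} Δ_M(u, v)`. -/
theorem trace_gap_min_max
    (M : Matrix (Fin 3) (Fin 3) ℝ) (hMsym : M.IsSymm)
    (v : Fin 3 → ℝ) (lam : ℝ) (hv : v ⬝ᵥ v = 1) (hev : M.mulVec v = lam • v)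
    (Rt : Matrix (Fin 3) (Fin 3) ℝ) (hRt : Rt = (2 : ℝ) • vecMulVec v v - 1)
    (θ : ℝ) (hθ₀ : 0 < θ) (hθπ : θ ≤ Real.pi)
    (U : Finset (Fin 3 → ℝ)) (hUne : U.Nonempty) (hUunit : ∀ u ∈ U, u ⬝ᵥ u = 1) :
    ((1 - Rt) * M).trace - U.inf' hUne (fun u => ((1 - Rt * Ra θ u) * M).trace) =
      (1 - Real.cos θ) * U.sup' hUne (fun u => DeltaM M u v) ∧
    ∀ δ : ℝ, δ < (1 - Real.cos θ) * U.sup' hUne (fun u => DeltaM M u v) →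
      δ < ((1 - Rt) * M).trace - U.inf' hUne (fun u => ((1 - Rt * Ra θ u) * M).trace) :=
  trace_gap_min_max_general M hMsym v lam hev Rt hRt θ U hUne
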